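/- arXiv:1708.02949 — 6 statements merged into one kernel-verified Lean document; each statement's English description precedes it below -/
import Mathlib

section
/- Let f1, f2 ∈ [0,1] with f2 < f1, and let L ≥ 0. The function g(L) = (f1·L + (1−f1)) / (f2·L + (1−f2)) is strictly monotonically increasing in L on [0,∞). -/
theorem cwola_monotone (f1 f2 : ℝ) (hf2 : 0 ≤ f2) (hlt : f2 < f1) (hf1 : f1 ≤ 1) :
    StrictMonoOn (fun L : ℝ => (f1 * L + (1 - f1)) / (f2 * L + (1 - f2))) (Set.Ici 0) := by
  intro a ha b hb hab
  simp only [Set.mem_Ici] at ha hb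
  have h2 : f2 < 1 := lt_of_lt_of_le hlt hf1
  have da : 0 < f2 * a + (1 - f2) := by nlinarith
  have db : 0 < f2 * b + (1 - f2) := by nlinarith
  rw [div_lt_div_iff₀ da db]
  nlinarith
end

section
/- Let p_S, p_B : X → ℝ be nonnegative functions and 0 ≤ f2 < f1 ≤ 1. Define p_{M1} = f1·p_S + (1−f1)·p_B and p_{M2} = f2·p_S + (1−f2)·p_B. Then for any x, y ∈ X with p_B(x) > 0, p_B(y) > 0, p_{M2}(x) > 0, p_{M2}(y) > 0: p_S(x)/p_B(x) < p_S(y)/p_B(y) if and only if p_{M1}(x)/p_{M2}(x) < p_{M1}(y)/p_{M2}(y). -/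
theorem cwola_pointwise_order {X : Type*} (pS pB : X → ℝ)
    (hS : ∀ x, 0 ≤ pS x) (hB : ∀ x, 0 ≤ pB x)
    (f1 f2 : ℝ) (hf2 : 0 ≤ f2) (hlt : f2 < f1) (hf1 : f1 ≤ 1)
    (x y : X) (hBx : 0 < pB x) (hBy : 0 < pB y)
    (hM2x : 0 < f2 * pS x + (1 - f2) * pB x) (hM2y : 0 < f2 * pS y + (1 - f2) * pB y) :
    pS x / pB x < pS y / pB y ↔
      (f1 * pS x + (1 - f1) * pB x) / (f2 * pS x + (1 - f2) * pB x) <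
      (f1 * pS y + (1 - f1) * pB y) / (f2 * pS y + (1 - f2) * pB y) := by
  rw [div_lt_div_iff₀ hBx hBy, div_lt_div_iff₀ hM2x hM2y]
  constructor <;> intro h <;> nlinarith [mul_pos hBx hBy, hS x, hS y,
    mul_pos hM2x hM2y, sub_pos.mpr hlt]
end

section
/- Let p_S, p_B : X → ℝ be nonnegative with p_B(x) > 0 for all x, and 0 ≤ f2 < f1 ≤ 1. Define mixtures p_{M1} = f1·p_S + (1−f1)·p_B and p_{M2} = f2·p_S + (1−f2)·p_B. Then there exists a strictly increasing function φ : [0,∞) → ℝ such that p_{M1}(x)/p_{M2}(x) = φ(p_S(x)/p_B(x)) for all x. -/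
theorem cwola_theorem {X : Type*} (pS pB : X → ℝ)
    (hS : ∀ x, 0 ≤ pS x) (hB : ∀ x, 0 < pB x)
    (f1 f2 : ℝ) (hf2 : 0 ≤ f2) (hlt : f2 < f1) (hf1 : f1 ≤ 1) :
    ∃ φ : ℝ → ℝ, StrictMonoOn φ (Set.Ici 0) ∧
      ∀ x, (f1 * pS x + (1 - f1) * pB x) / (f2 * pS x + (1 - f2) * pB x)
        = φ (pS x / pB x) := by
  have hf2lt1 : f2 < 1 := lt_of_lt_of_le hlt hf1
  refine ⟨fun t => (f1 * t + (1 - f1)) / (f2 * t + (1 - f2)), ?_, ?_⟩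
  · intro a ha b hb hab
    simp only [Set.mem_Ici] at ha hb
    have hda : 0 < f2 * a + (1 - f2) := by nlinarith
    have hdb : 0 < f2 * b + (1 - f2) := by nlinarith
    rw [div_lt_div_iff₀ hda hdb]
    nlinarith
  · intro x
    have hpB := hB x
    have hden : f2 * pS x + (1 - f2) * pB x ≠ 0 := by nlinarith [hS x]
    have hden2 : f2 * (pS x / pB x) + (1 - f2) ≠ 0 := by
      have : f2 * (pS x / pB x) + (1 - f2) = (f2 * pS x + (1 - f2) * pB x) / pB x := by
        field_simp
      rw [this]
      exact div_ne_zero hden hpB.ne'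
    field_simp
end

section
/- Let μ_S, μ_B be probability measures on a measurable space X with μ_S absolutely continuous with respect to μ_B, with Radon–Nikodym derivative L = dμ_S/dμ_B. For 0 ≤ f2 < f1 ≤ 1, define mixture measures μ_{M1} = f1·μ_S + (1−f1)·μ_B and μ_{M2} = f2·μ_S + (1−f2)·μ_B. Then μ_{M1} is absolutely continuous with respect to μ_{M2}, and dμ_{M1}/dμ_{M2} = (f1·L + (1−f1))/(f2·L + (1−f2)) holds μ_{M2}-almost everywhere. -/
/-!
Both mixtures have density `c * L + d` with respect to `μB`, and `μB ≪ μM2` because `1 - f2 > 0`.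
So `μM1 ≪ μB ≪ μM2`, and `dμM1/dμM2` is the ratio of the two densities with respect to the common
dominating measure `μB`.
-/

open MeasureTheory

open scoped ENNReal NNReal

namespace MeasureTheory.Measure

variable {α : Type*} [MeasurableSpace α] {μ ν : Measure α} {c d : ℝ≥0∞}

lemma sigmaFinite_smul_of_ne_top [SigmaFinite μ] (hc : c ≠ ∞) : SigmaFinite (c • μ) := by
  lift c to ℝ≥0 using hc
  exact SMul.sigmaFinite c

instance sigmaFinite_ofReal_smul [SigmaFinite μ] (a : ℝ) : SigmaFinite (ENNReal.ofReal a • μ) :=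
  sigmaFinite_smul_of_ne_top ENNReal.ofReal_ne_top

lemma smul_add_smul_absolutelyContinuous (hμν : μ ≪ ν) (c d : ℝ≥0∞) : c • μ + d • ν ≪ ν :=
  (smul_absolutelyContinuous.trans hμν).add_left smul_absolutelyContinuous

lemma absolutelyContinuous_smul_add_smul (μ ν : Measure α) (c : ℝ≥0∞) (hd : d ≠ 0) :
    ν ≪ c • μ + d • ν :=
  (absolutelyContinuous_smul hd).add_right' _

lemma rnDeriv_smul_add_smul_self [SigmaFinite μ] [SigmaFinite ν] (hc : c ≠ ∞) (hd : d ≠ ∞) :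
    (c • μ + d • ν).rnDeriv ν =ᵐ[ν] fun x ↦ c * μ.rnDeriv ν x + d := by
  have := sigmaFinite_smul_of_ne_top (μ := μ) hc
  have := sigmaFinite_smul_of_ne_top (μ := ν) hd
  filter_upwards [rnDeriv_add' (c • μ) (d • ν) ν, rnDeriv_smul_left_of_ne_top' μ ν hc,
    rnDeriv_smul_left_of_ne_top' ν ν hd, rnDeriv_self ν] with x h_add hμ hν h_self
  simp [h_add, hμ, hν, h_self]

end MeasureTheory.Measure

open Measure in
theorem cwola_measure_general {X : Type*} [MeasurableSpace X]
    (μS μB : Measure X) [IsProbabilityMeasure μS] [IsProbabilityMeasure μB]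
    (hac : μS ≪ μB) (f1 f2 : ℝ) (hlt : f2 < f1) (hf1 : f1 ≤ 1) :
    (ENNReal.ofReal f1 • μS + ENNReal.ofReal (1 - f1) • μB) ≪
      (ENNReal.ofReal f2 • μS + ENNReal.ofReal (1 - f2) • μB) ∧
    (ENNReal.ofReal f1 • μS + ENNReal.ofReal (1 - f1) • μB).rnDeriv
        (ENNReal.ofReal f2 • μS + ENNReal.ofReal (1 - f2) • μB)
      =ᵐ[ENNReal.ofReal f2 • μS + ENNReal.ofReal (1 - f2) • μB]
      fun x => (ENNReal.ofReal f1 * μS.rnDeriv μB x + ENNReal.ofReal (1 - f1)) /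
        (ENNReal.ofReal f2 * μS.rnDeriv μB x + ENNReal.ofReal (1 - f2)) := by
  have hd2 : ENNReal.ofReal (1 - f2) ≠ 0 := (ENNReal.ofReal_pos.2 (by linarith)).ne'
  have hM1 := smul_add_smul_absolutelyContinuous hac (ENNReal.ofReal f1) (ENNReal.ofReal (1 - f1))
  have hM2 := smul_add_smul_absolutelyContinuous hac (ENNReal.ofReal f2) (ENNReal.ofReal (1 - f2))
  have hμB := absolutelyContinuous_smul_add_smul μS μB (ENNReal.ofReal f2) hd2
  refine ⟨hM1.trans hμB, ?_⟩
  filter_upwards [rnDeriv_eq_div hM1 hM2,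
    hM2 (rnDeriv_smul_add_smul_self (μ := μS) (c := ENNReal.ofReal f1) ENNReal.ofReal_ne_top
      ENNReal.ofReal_ne_top),
    hM2 (rnDeriv_smul_add_smul_self (μ := μS) (c := ENNReal.ofReal f2) ENNReal.ofReal_ne_top
      ENNReal.ofReal_ne_top)] with x h h1 h2
  rw [h, h1, h2]

theorem cwola_measure {X : Type*} [MeasurableSpace X]
    (μS μB : Measure X) [IsProbabilityMeasure μS] [IsProbabilityMeasure μB]
    (hac : μS ≪ μB) (f1 f2 : ℝ) (hf2 : 0 ≤ f2) (hlt : f2 < f1) (hf1 : f1 ≤ 1) :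
    (ENNReal.ofReal f1 • μS + ENNReal.ofReal (1 - f1) • μB) ≪
      (ENNReal.ofReal f2 • μS + ENNReal.ofReal (1 - f2) • μB) ∧
    (ENNReal.ofReal f1 • μS + ENNReal.ofReal (1 - f1) • μB).rnDeriv
        (ENNReal.ofReal f2 • μS + ENNReal.ofReal (1 - f2) • μB)
      =ᵐ[ENNReal.ofReal f2 • μS + ENNReal.ofReal (1 - f2) • μB]
      fun x => (ENNReal.ofReal f1 * μS.rnDeriv μB x + ENNReal.ofReal (1 - f1)) /
        (ENNReal.ofReal f2 * μS.rnDeriv μB x + ENNReal.ofReal (1 - f2)) :=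
  cwola_measure_general μS μB hac f1 f2 hlt hf1
end

section
/- Let p_S, p_B : X → [0,∞), 0 ≤ f2 < f1 ≤ 1, and let p_{M1} = f1·p_S + (1−f1)·p_B, p_{M2} = f2·p_S + (1−f2)·p_B. For any threshold c > 0 and any x with p_B(x) > 0, the inequality p_{M1}(x)/p_{M2}(x) > c holds if and only if p_S(x)/p_B(x) > c', where c' = ((1−f2)·c − (1−f1))/(f1 − f2·c), provided f1 − f2·c > 0. -/
theorem cwola_threshold_transform {X : Type*} (pS pB : X → ℝ)
    (hS : ∀ x, 0 ≤ pS x) (hB : ∀ x, 0 ≤ pB x)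
    (f1 f2 : ℝ) (hf2 : 0 ≤ f2) (hlt : f2 < f1) (hf1 : f1 ≤ 1)
    (c : ℝ) (hc : 0 < c) (hcd : 0 < f1 - f2 * c)
    (x : X) (hBx : 0 < pB x) :
    c < (f1 * pS x + (1 - f1) * pB x) / (f2 * pS x + (1 - f2) * pB x) ↔
      ((1 - f2) * c - (1 - f1)) / (f1 - f2 * c) < pS x / pB x := by
  have hf2' : 0 < 1 - f2 := by linarith
  have hden : 0 < f2 * pS x + (1 - f2) * pB x := by
    have := hS x
    nlinarith
  rw [lt_div_iff₀ hden, div_lt_div_iff₀ hcd hBx]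
  constructor <;> intro h <;> nlinarith
end

section
/- Let f1 ∈ (1/2, 1] and f2 = 1 − f1, and let 0 ≤ f2' < f1' ≤ 1 with f1' + f2' = 1, f1' > 1/2. For p_S, p_B : X → [0,∞) define true mixtures p_{M1} = f1·p_S + (1−f1)·p_B, p_{M2} = f2·p_S + (1−f2)·p_B, and the LLP estimate with wrong fractions h(x) = ((1−f2')·p_{M1}(x) − (1−f1')·p_{M2}(x)) / (f1'·p_{M2}(x) − f2'·p_{M1}(x)). Then wherever the denominator is positive and p_B(x) > 0, h(x) is a strictly increasing Möbius function of L(x) = p_S(x)/p_B(x); in particular, for any x, y with both denominators positive, h(x) < h(y) iff L(x) < L(y). -/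
theorem llp_wrong_fractions_monotone {X : Type*} (pS pB : X → ℝ)
    (hS : ∀ x, 0 ≤ pS x) (hB : ∀ x, 0 ≤ pB x)
    (f1 f1' f2' : ℝ) (hf1 : f1 ∈ Set.Ioc (1/2 : ℝ) 1)
    (hf2' : 0 ≤ f2') (hlt' : f2' < f1') (hf1' : f1' ≤ 1)
    (hsum' : f1' + f2' = 1) (hhalf' : 1/2 < f1') :
    let f2 : ℝ := 1 - f1
    let pM1 : X → ℝ := fun x => f1 * pS x + (1 - f1) * pB x
    let pM2 : X → ℝ := fun x => f2 * pS x + (1 - f2) * pB x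
    let h : X → ℝ := fun x =>
      ((1 - f2') * pM1 x - (1 - f1') * pM2 x) / (f1' * pM2 x - f2' * pM1 x)
    (∃ a b c d : ℝ, 0 < a * d - b * c ∧
      ∀ x, 0 < f1' * pM2 x - f2' * pM1 x → 0 < pB x →
        0 < c * (pS x / pB x) + d ∧
        h x = (a * (pS x / pB x) + b) / (c * (pS x / pB x) + d)) ∧
    ∀ x y, 0 < f1' * pM2 x - f2' * pM1 x → 0 < f1' * pM2 y - f2' * pM1 y →
      0 < pB x → 0 < pB y →
      (h x < h y ↔ pS x / pB x < pS y / pB y) := by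
  intro f2 pM1 pM2 h
  obtain ⟨hf1l, hf1r⟩ := hf1
  set a : ℝ := f1' * f1 - f2' * (1 - f1) with ha
  set b : ℝ := f1' * (1 - f1) - f2' * f1 with hb
  have hdet : 0 < a * a - b * b := by
    have h1 : 0 < f1' - f2' := by linarith
    have h2 : 0 < 2 * f1 - 1 := by linarith
    have he : a * a - b * b = (f1' - f2') * (2 * f1 - 1) := by
      rw [ha, hb]; linear_combination (f1' - f2') * (2 * f1 - 1) * hsum'
    rw [he]; exact mul_pos h1 h2
  have key : ∀ x, 0 < f1' * pM2 x - f2' * pM1 x → 0 < pB x →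
      0 < b * (pS x / pB x) + a ∧
      h x = (a * (pS x / pB x) + b) / (b * (pS x / pB x) + a) := by
    intro x hden hpB
    have e1 : (1:ℝ) - f2' = f1' := by linarith
    have e2 : (1:ℝ) - f1' = f2' := by linarith
    have hden' : f1' * pM2 x - f2' * pM1 x = pB x * (b * (pS x / pB x) + a) := by
      simp only [pM1, pM2, f2, ha, hb]
      field_simp
      ring
    have hnum : (1 - f2') * pM1 x - (1 - f1') * pM2 x
        = pB x * (a * (pS x / pB x) + b) := by
      simp only [pM1, pM2, f2, ha, hb]
      rw [e1, e2]
      field_simp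
      ring
    have hpos : 0 < b * (pS x / pB x) + a := by
      by_contra hc
      push_neg at hc
      rw [hden'] at hden
      nlinarith
    refine ⟨hpos, ?_⟩
    simp only [h]
    rw [hnum, hden', mul_div_mul_left _ _ hpB.ne']
  constructor
  · exact ⟨a, b, b, a, hdet, fun x hd hp => key x hd hp⟩
  · intro x y hdx hdy hpx hpy
    obtain ⟨hpx', hex⟩ := key x hdx hpx
    obtain ⟨hpy', hey⟩ := key y hdy hpy
    rw [hex, hey, div_lt_div_iff₀ hpx' hpy']
    set Lx := pS x / pB x
    set Ly := pS y / pB y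
    constructor
    · intro hlt
      by_contra hc
      push_neg at hc
      nlinarith [mul_nonneg hdet.le (sub_nonneg.mpr hc)]
    · intro hlt
      nlinarith [mul_pos hdet (sub_pos.mpr hlt)]
end
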